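/- Let σ > 0 and A > 0, and let Z be a real random variable whose law is the centered Gaussian measure on ℝ with variance σ². Then there exists a constant c > 0 such that for every t ≥ 1 and every h with 0 ≤ h ≤ A/√t, E[Φ̄(h·√t − B/√t) − e^{2hB}·Φ̄(h·√t + B/√t)] ≥ c/√t, where B = max(Z − h, 0)/σ². -/

import Mathlib

/-! Write `x = h√t ∈ [0, A]` and `y = B/√t`; the integrand is then `fFun x y`. Its `y`-derivative is
`2 φ(x - y) gFun x y`, which is positive for `y ≥ 0` by Mills' ratio inequality, so `fFun x`
vanishes at `0`, is nondecreasing on `[0, ∞)` and, by compactness, grows at least like `m y` on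
`[0, 1]` uniformly in `x ∈ [0, A]`. On the event `Z ≥ A + σ²` one has `y ≥ 1/√t`, so the integrand
is at least `m/√t` there, and it is nonnegative everywhere. -/

open Real Filter MeasureTheory

/-- Standard normal density. -/
noncomputable def stdPhi (u : ℝ) : ℝ := (Real.sqrt (2 * Real.pi))⁻¹ * Real.exp (-u ^ 2 / 2)

/-- Standard normal distribution function. -/
noncomputable def stdCdf (u : ℝ) : ℝ := ∫ s in Set.Iic u, stdPhi s

/-- Standard normal survivor function. -/
noncomputable def stdSurv (u : ℝ) : ℝ := 1 - stdCdf u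

noncomputable def fFun (x y : ℝ) : ℝ := stdSurv (x - y) - Real.exp (2 * x * y) * stdSurv (x + y)

noncomputable def gFun (x y : ℝ) : ℝ := 1 - x * stdSurv (x + y) / stdPhi (x + y)

open Set ProbabilityTheory Topology

lemma stdPhi_eq_gaussianPDFReal : stdPhi = gaussianPDFReal 0 1 := by
  ext u
  simp [stdPhi, gaussianPDFReal]

lemma stdPhi_pos (u : ℝ) : 0 < stdPhi u := by
  unfold stdPhi
  positivity

@[fun_prop]
lemma continuous_stdPhi : Continuous stdPhi := by
  unfold stdPhi
  fun_prop

lemma integrable_stdPhi : Integrable stdPhi :=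
  stdPhi_eq_gaussianPDFReal ▸ integrable_gaussianPDFReal 0 1

lemma integral_stdPhi : ∫ s, stdPhi s = 1 := by
  rw [stdPhi_eq_gaussianPDFReal]
  exact integral_gaussianPDFReal_eq_one 0 one_ne_zero

lemma hasDerivAt_stdPhi (u : ℝ) : HasDerivAt stdPhi (-u * stdPhi u) u := by
  have h : HasDerivAt (fun v : ℝ => -v ^ 2 / 2) (-u) u := by
    simpa using ((hasDerivAt_pow 2 u).neg.div_const 2).congr_deriv (by ring)
  exact (h.exp.const_mul (√(2 * π))⁻¹).congr_deriv (by simp only [stdPhi]; ring)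

lemma integrable_mul_stdPhi : Integrable fun s => s * stdPhi s := by
  convert (integrable_mul_exp_neg_mul_sq (b := 1 / 2) (by norm_num)).const_mul (√(2 * π))⁻¹
    using 2 with s
  simp only [stdPhi]
  ring_nf

lemma tendsto_stdPhi_atTop : Tendsto stdPhi atTop (𝓝 0) := by
  have h : Tendsto (fun u : ℝ => -u ^ 2 / 2) atTop atBot :=
    (tendsto_neg_atBot_iff.mpr (tendsto_pow_atTop two_ne_zero)).atBot_div_const two_pos
  have := (tendsto_exp_atBot.comp h).const_mul (√(2 * π))⁻¹
  rwa [mul_zero] at this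

lemma integral_Ioi_mul_stdPhi (u : ℝ) : ∫ s in Ioi u, s * stdPhi s = stdPhi u := by
  have h := integral_Ioi_of_hasDerivAt_of_tendsto' (a := u) (f := fun s => -stdPhi s)
    (fun s _ => (hasDerivAt_stdPhi s).neg.congr_deriv (by ring)) integrable_mul_stdPhi.integrableOn
    tendsto_stdPhi_atTop.neg
  simpa using h

lemma stdSurv_eq_integral_Ioi (u : ℝ) : stdSurv u = ∫ s in Ioi u, stdPhi s := by
  have h := intervalIntegral.integral_Iic_add_Ioi (b := u) integrable_stdPhi.integrableOn
    integrable_stdPhi.integrableOn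
  rw [integral_stdPhi] at h
  rw [stdSurv, stdCdf]
  linarith

lemma stdSurv_nonneg (u : ℝ) : 0 ≤ stdSurv u := by
  rw [stdSurv_eq_integral_Ioi]
  exact setIntegral_nonneg measurableSet_Ioi fun s _ => (stdPhi_pos s).le

lemma stdSurv_le_one (u : ℝ) : stdSurv u ≤ 1 := by
  have : 0 ≤ stdCdf u := setIntegral_nonneg measurableSet_Iic fun s _ => (stdPhi_pos s).le
  rw [stdSurv]
  linarith

lemma hasDerivAt_stdSurv (u : ℝ) : HasDerivAt stdSurv (-stdPhi u) u := by
  have h : stdSurv = fun v => stdSurv 0 - ∫ s in (0 : ℝ)..v, stdPhi s := by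
    ext v
    rw [← intervalIntegral.integral_Iic_sub_Iic integrable_stdPhi.integrableOn
      integrable_stdPhi.integrableOn, stdSurv, stdSurv, stdCdf, stdCdf]
    ring
  rw [h]
  exact (continuous_stdPhi.integral_hasStrictDerivAt 0 u).hasDerivAt.const_sub _

@[fun_prop]
lemma continuous_stdSurv : Continuous stdSurv :=
  continuous_iff_continuousAt.mpr fun u => (hasDerivAt_stdSurv u).continuousAt

lemma mul_stdSurv_lt_stdPhi {x u : ℝ} (hxu : x ≤ u) : x * stdSurv u < stdPhi u := by
  have hint : Integrable fun s => (s - x) * stdPhi s := by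
    simp_rw [sub_mul]
    exact integrable_mul_stdPhi.sub (integrable_stdPhi.const_mul x)
  have hgap : stdPhi u - x * stdSurv u = ∫ s in Ioi u, (s - x) * stdPhi s := by
    simp only [sub_mul]
    rw [integral_sub integrable_mul_stdPhi.integrableOn
      (integrable_stdPhi.const_mul x).integrableOn, integral_const_mul,
      integral_Ioi_mul_stdPhi, stdSurv_eq_integral_Ioi]
  have hpos : ∀ s ∈ Ioi u, 0 < (s - x) * stdPhi s := fun s hs =>
    mul_pos (by linarith [mem_Ioi.mp hs]) (stdPhi_pos s)
  have : 0 < ∫ s in Ioi u, (s - x) * stdPhi s := by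
    rw [setIntegral_pos_iff_support_of_nonneg_ae
      ((ae_restrict_iff' measurableSet_Ioi).mpr (ae_of_all _ fun s hs => (hpos s hs).le))
      hint.integrableOn, inter_eq_right.mpr fun s hs => Function.mem_support.mpr (hpos s hs).ne']
    simp
  linarith

lemma stdPhi_sub_eq_exp_mul_stdPhi_add (x y : ℝ) :
    stdPhi (x - y) = exp (2 * x * y) * stdPhi (x + y) := by
  simp only [stdPhi]
  rw [mul_left_comm, ← exp_add]
  ring_nf

lemma fFun_zero_right (x : ℝ) : fFun x 0 = 0 := by
  simp [fFun]

lemma hasDerivAt_fFun (x y : ℝ) : HasDerivAt (fFun x) (2 * stdPhi (x - y) * gFun x y) y := by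
  have hminus := (hasDerivAt_stdSurv (x - y)).comp y ((hasDerivAt_id y).const_sub x)
  have hplus := (hasDerivAt_stdSurv (x + y)).comp y ((hasDerivAt_id y).const_add x)
  have hexp := ((hasDerivAt_id y).const_mul (2 * x)).exp
  refine (hminus.sub (hexp.mul hplus)).congr_deriv ?_
  rw [gFun, stdPhi_sub_eq_exp_mul_stdPhi_add]
  field_simp [(stdPhi_pos (x + y)).ne']
  simp only [Function.comp, id]
  ring

@[fun_prop]
lemma continuous_fFun (x : ℝ) : Continuous (fFun x) :=
  continuous_iff_continuousAt.mpr fun y => (hasDerivAt_fFun x y).continuousAt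

@[fun_prop]
lemma continuous_gFun : Continuous fun p : ℝ × ℝ => gFun p.1 p.2 := by
  unfold gFun
  fun_prop (disch := exact fun _ => (stdPhi_pos _).ne')

lemma gFun_pos {x y : ℝ} (hy : 0 ≤ y) : 0 < gFun x y := by
  have := mul_stdSurv_lt_stdPhi (by linarith : x ≤ x + y)
  rw [gFun, sub_pos, div_lt_one (stdPhi_pos _)]
  exact this

lemma monotoneOn_fFun (x : ℝ) : MonotoneOn (fFun x) (Ici 0) :=
  monotoneOn_of_deriv_nonneg (convex_Ici 0) (continuous_fFun x).continuousOn
    (fun y _ => (hasDerivAt_fFun x y).differentiableAt.differentiableWithinAt) fun y hy => by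
      rw [interior_Ici] at hy
      rw [(hasDerivAt_fFun x y).deriv]
      exact mul_nonneg (mul_nonneg zero_le_two (stdPhi_pos _).le) (gFun_pos (le_of_lt hy)).le

lemma fFun_nonneg (x : ℝ) {y : ℝ} (hy : 0 ≤ y) : 0 ≤ fFun x y :=
  fFun_zero_right x ▸ monotoneOn_fFun x self_mem_Ici hy hy

lemma abs_fFun_le_one (x : ℝ) {y : ℝ} (hy : 0 ≤ y) : |fFun x y| ≤ 1 := by
  have := mul_nonneg (exp_pos (2 * x * y)).le (stdSurv_nonneg (x + y))
  refine abs_le.mpr ⟨by linarith [fFun_nonneg x hy], ?_⟩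
  rw [fFun]
  linarith [stdSurv_le_one (x - y)]

lemma fFun_mul_div {s : ℝ} (hs : s ≠ 0) (h b : ℝ) :
    fFun (h * s) (b / s) = stdSurv (h * s - b / s) - exp (2 * h * b) * stdSurv (h * s + b / s) := by
  rw [fFun]
  congr 3
  field_simp

lemma exists_pos_mul_le_fFun (A : ℝ) :
    ∃ m > 0, ∀ x ∈ Icc 0 A, ∀ y ∈ Icc (0 : ℝ) 1, m * y ≤ fFun x y := by
  obtain ⟨m, hm, hmin⟩ := (isCompact_Icc.prod isCompact_Icc).exists_forall_le'
    (f := fun p : ℝ × ℝ => 2 * stdPhi (p.1 - p.2) * gFun p.1 p.2) (a := 0)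
    (by fun_prop)
    fun p hp => mul_pos (mul_pos two_pos (stdPhi_pos _)) (gFun_pos (mem_prod.mp hp).2.1)
  refine ⟨m, hm, fun x hx y hy => ?_⟩
  have := (convex_Icc (0 : ℝ) 1).mul_sub_le_image_sub_of_le_deriv (continuous_fFun x).continuousOn
    (fun y _ => (hasDerivAt_fFun x y).differentiableAt.differentiableWithinAt) (C := m)
    (fun s hs => (hasDerivAt_fFun x s).deriv ▸ hmin (x, s) ⟨hx, interior_subset hs⟩)
    0 (left_mem_Icc.mpr zero_le_one) y hy hy.1
  simpa [fFun_zero_right] using this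

lemma measureReal_gaussianReal_pos (m : ℝ) {v : NNReal} (hv : v ≠ 0) {s : Set ℝ}
    (hs : volume s ≠ 0) : 0 < (gaussianReal m v).real s :=
  ENNReal.toReal_pos (fun h0 => hs (gaussianReal_absolutelyContinuous' m hv h0))
    (measure_ne_top _ s)

theorem gaussian_lower_bound_plus_general (σ A : ℝ) (hσ : 0 < σ) :
    ∃ c : ℝ, 0 < c ∧ ∀ t : ℝ, 1 ≤ t → ∀ h : ℝ, 0 ≤ h → h ≤ A / Real.sqrt t →
      c / Real.sqrt t ≤
        ∫ z, (stdSurv (h * Real.sqrt t - max (z - h) 0 / σ ^ 2 / Real.sqrt t) -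
            Real.exp (2 * h * (max (z - h) 0 / σ ^ 2)) *
              stdSurv (h * Real.sqrt t + max (z - h) 0 / σ ^ 2 / Real.sqrt t))
          ∂(ProbabilityTheory.gaussianReal 0 (Real.toNNReal (σ ^ 2))) := by
  obtain ⟨m, hm, hmf⟩ := exists_pos_mul_le_fFun A
  set μ := gaussianReal 0 (σ ^ 2).toNNReal
  set S := Ici (A + σ ^ 2)
  have hμS : 0 < μ.real S := measureReal_gaussianReal_pos 0 (by simpa using hσ.ne') (by simp [S])
  refine ⟨m * μ.real S, by positivity, fun t ht h hh hht => ?_⟩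
  have hst : 1 ≤ √t := one_le_sqrt.mpr ht
  set x := h * √t
  have hx : x ∈ Icc 0 A := ⟨by positivity, (le_div_iff₀ (by positivity)).mp hht⟩
  set y : ℝ → ℝ := fun z => max (z - h) 0 / σ ^ 2 / √t
  have hy : ∀ z, 0 ≤ y z := fun z => by positivity
  have hint : Integrable (fun z => fFun x (y z)) μ :=
    .of_bound (by fun_prop) 1 (ae_of_all _ fun z => abs_fFun_le_one x (hy z))
  have hS : ∀ z ∈ S, m / √t ≤ fFun x (y z) := fun z hz => by
    have hσz : σ ^ 2 ≤ max (z - h) 0 :=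
      le_max_of_le_left (by linarith [mem_Ici.mp hz, le_mul_of_one_le_right hh hst, hx.2])
    have hyz : 1 / √t ≤ y z := div_le_div_of_nonneg_right ((one_le_div₀ (by positivity)).mpr hσz)
      (by positivity)
    have hy₀ : 1 / √t ∈ Icc (0 : ℝ) 1 := ⟨by positivity, (div_le_one (by positivity)).mpr hst⟩
    calc m / √t = m * (1 / √t) := by ring
      _ ≤ fFun x (1 / √t) := hmf x hx _ hy₀
      _ ≤ fFun x (y z) := monotoneOn_fFun x hy₀.1 (hy z) hyz
  calc m * μ.real S / √t = m / √t * μ.real S := by ring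
    _ ≤ ∫ z in S, fFun x (y z) ∂μ :=
      setIntegral_ge_of_const_le_real measurableSet_Ici (measure_ne_top μ S) hS hint.integrableOn
    _ ≤ ∫ z, fFun x (y z) ∂μ :=
      setIntegral_le_integral hint (ae_of_all _ fun z => fFun_nonneg x (hy z))
    _ = _ := integral_congr_ae (ae_of_all _ fun z => fFun_mul_div (by positivity) h _)

/-- Gaussian-averaged lower bound of order 1/√t for the hitting probability with small drift. -/
theorem gaussian_lower_bound_plus (σ A : ℝ) (hσ : 0 < σ) (hA : 0 < A) :
    ∃ c : ℝ, 0 < c ∧ ∀ t : ℝ, 1 ≤ t → ∀ h : ℝ, 0 ≤ h → h ≤ A / Real.sqrt t →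
      c / Real.sqrt t ≤
        ∫ z, (stdSurv (h * Real.sqrt t - max (z - h) 0 / σ ^ 2 / Real.sqrt t) -
            Real.exp (2 * h * (max (z - h) 0 / σ ^ 2)) *
              stdSurv (h * Real.sqrt t + max (z - h) 0 / σ ^ 2 / Real.sqrt t))
          ∂(ProbabilityTheory.gaussianReal 0 (Real.toNNReal (σ ^ 2))) :=
  gaussian_lower_bound_plus_general σ A hσ
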